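/- Let A : ℝ → M₃(ℝ) be continuous and B : ℝ → M₃(ℝ) be differentiable, both with trace 0 for every t, and set v(t,x) = A(t)x, H(t,x) = B(t)x. Then H satisfies the induction equation ∂ₜH = ∇×(v×H) + η ΔH at every point of ℝ × ℝ³ if and only if B′(t) = A(t)B(t) − B(t)A(t) for every t. (This is the paper's reduction of equation (M4) under the linear ansatz to the ODE system (2.7)–(2.9).) -/

import Mathlib

open Real Matrix

/-- Partial derivative in the `i`-th spatial coordinate. -/
noncomputable def pd (i : Fin 3) (f : (Fin 3 → ℝ) → ℝ) (x : Fin 3 → ℝ) : ℝ :=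
  deriv (fun s => f (Function.update x i s)) (x i)

/-- Divergence of a vector field on `ℝ³`. -/
noncomputable def vdiv (F : (Fin 3 → ℝ) → (Fin 3 → ℝ)) (x : Fin 3 → ℝ) : ℝ :=
  ∑ i, pd i (fun y => F y i) x

/-- Curl of a vector field on `ℝ³`. -/
noncomputable def vcurl (F : (Fin 3 → ℝ) → (Fin 3 → ℝ)) (x : Fin 3 → ℝ) : Fin 3 → ℝ :=
  ![pd 1 (fun y => F y 2) x - pd 2 (fun y => F y 1) x,
    pd 2 (fun y => F y 0) x - pd 0 (fun y => F y 2) x,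
    pd 0 (fun y => F y 1) x - pd 1 (fun y => F y 0) x]

/-- Laplacian of a scalar field on `ℝ³`. -/
noncomputable def slap (f : (Fin 3 → ℝ) → ℝ) (x : Fin 3 → ℝ) : ℝ :=
  ∑ i, pd i (fun y => pd i f y) x

/-- Cross product on `ℝ³`. -/
def cross3 (u v : Fin 3 → ℝ) : Fin 3 → ℝ :=
  ![u 1 * v 2 - u 2 * v 1, u 2 * v 0 - u 0 * v 2, u 0 * v 1 - u 1 * v 0]

/-- The incompressible viscous MHD equations with finite electrical conductivity:
(M1) `∇·v = 0`, (M2) momentum, (M3) `∇·H = 0`, (M4) induction. -/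
def MHD (ρ ν μ₀ η : ℝ) (v H : ℝ → (Fin 3 → ℝ) → (Fin 3 → ℝ))
    (p : ℝ → (Fin 3 → ℝ) → ℝ) : Prop :=
  ∀ (t : ℝ) (x : Fin 3 → ℝ),
    vdiv (v t) x = 0 ∧
    (∀ i, deriv (fun s => v s x i) t
        + (∑ j, v t x j * pd j (fun y => v t y i) x)
        - μ₀ * cross3 (H t x) (vcurl (H t) x) i
        + (1 / ρ) * pd i (p t) x
        = ν * slap (fun y => v t y i) x) ∧
    vdiv (H t) x = 0 ∧
    (∀ i, deriv (fun s => H s x i) t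
        = vcurl (fun y => cross3 (v t y) (H t y)) x i
          + η * slap (fun y => H t y i) x)

/-! For linear fields the Laplacian term vanishes, `∂ₜH = B'x`, and the vector identity
`∇×(u×w) = (∇·w) u - (∇·u) w + (w·∇) u - (u·∇) w` gives
`∇×(Ax × Bx) = (tr B) Ax - (tr A) Bx + (AB - BA)x`.
With both traces zero, (M4) says `B'x = (AB - BA)x` for every `x`. -/

lemma hasDerivAt_mulVec_update {m n : Type*} [Fintype n] [DecidableEq n]
    (M : Matrix m n ℝ) (i : m) (k : n) (x : n → ℝ) (s : ℝ) :
    HasDerivAt (fun s => (M *ᵥ Function.update x k s) i) (M i k) s := by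
  let L : (n → ℝ) →L[ℝ] ℝ :=
    (ContinuousLinearMap.proj i).comp (LinearMap.toContinuousLinearMap (mulVecLin M))
  have hL : L (Pi.single k 1) = M i k := by simp [L, mulVec_single]
  rw [← hL]
  exact L.hasFDerivAt.comp_hasDerivAt s (hasDerivAt_update x k s)

lemma hasDerivAt_mulVec_apply {m n : Type*} [Fintype n] {B B' : ℝ → Matrix m n ℝ}
    {t : ℝ} (hB : ∀ i j, HasDerivAt (fun s => B s i j) (B' t i j) t) (x : n → ℝ) (i : m) :
    HasDerivAt (fun s => (B s *ᵥ x) i) ((B' t *ᵥ x) i) t := by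
  simp only [mulVec, dotProduct]
  exact HasDerivAt.fun_sum fun j _ => (hB i j).mul_const (x j)

lemma pd_mulVec (M : Matrix (Fin 3) (Fin 3) ℝ) (i k : Fin 3) (x : Fin 3 → ℝ) :
    pd k (fun y => (M *ᵥ y) i) x = M i k :=
  (hasDerivAt_mulVec_update M i k x _).deriv

lemma slap_mulVec (M : Matrix (Fin 3) (Fin 3) ℝ) (i : Fin 3) (x : Fin 3 → ℝ) :
    slap (fun y => (M *ᵥ y) i) x = 0 := by
  simp only [slap, pd_mulVec]
  simp [pd]

lemma pd_mulVec_mul_sub_mulVec_mul (M N : Matrix (Fin 3) (Fin 3) ℝ) (a b c d k : Fin 3)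
    (x : Fin 3 → ℝ) :
    pd k (fun y => (M *ᵥ y) a * (N *ᵥ y) b - (M *ᵥ y) c * (N *ᵥ y) d) x
      = (M a k * (N *ᵥ x) b + (M *ᵥ x) a * N b k)
        - (M c k * (N *ᵥ x) d + (M *ᵥ x) c * N d k) := by
  have h := ((hasDerivAt_mulVec_update M a k x (x k)).mul
      (hasDerivAt_mulVec_update N b k x (x k))).sub
    ((hasDerivAt_mulVec_update M c k x (x k)).mul (hasDerivAt_mulVec_update N d k x (x k)))
  simp only [Function.update_eq_self] at h
  exact h.deriv

lemma vcurl_cross3_mulVec (A B : Matrix (Fin 3) (Fin 3) ℝ) (x : Fin 3 → ℝ) :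
    vcurl (fun y => cross3 (A *ᵥ y) (B *ᵥ y)) x
      = B.trace • (A *ᵥ x) - A.trace • (B *ᵥ x) + (A * B - B * A) *ᵥ x := by
  funext i
  fin_cases i <;>
  · simp only [vcurl, cross3, cons_val_zero, cons_val_one, cons_val_two, head_cons, tail_cons,
      Fin.zero_eta, Fin.mk_one, Fin.reduceFinMk]
    rw [pd_mulVec_mul_sub_mulVec_mul, pd_mulVec_mul_sub_mulVec_mul]
    simp [Matrix.trace, Fin.sum_univ_three, mulVec, dotProduct, Matrix.mul_apply]
    ring

theorem stmt_18_general (η : ℝ)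
    (A B B' : ℝ → Matrix (Fin 3) (Fin 3) ℝ)
    (hAtr : ∀ t, (A t).trace = 0) (hBtr : ∀ t, (B t).trace = 0)
    (hB : ∀ i j t, HasDerivAt (fun s => B s i j) (B' t i j) t) :
    (∀ (t : ℝ) (x : Fin 3 → ℝ) (i : Fin 3),
        deriv (fun s => (B s).mulVec x i) t
          = vcurl (fun y => cross3 ((A t).mulVec y) ((B t).mulVec y)) x i
            + η * slap (fun y => (B t).mulVec y i) x)
      ↔ ∀ t, B' t = A t * B t - B t * A t := by
  have hM4 (t : ℝ) (x : Fin 3 → ℝ) (i : Fin 3) :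
      deriv (fun s => (B s *ᵥ x) i) t
          = vcurl (fun y => cross3 (A t *ᵥ y) (B t *ᵥ y)) x i
            + η * slap (fun y => (B t *ᵥ y) i) x
        ↔ (B' t *ᵥ x) i = ((A t * B t - B t * A t) *ᵥ x) i := by
    rw [(hasDerivAt_mulVec_apply (fun i j => hB i j t) x i).deriv, vcurl_cross3_mulVec,
      slap_mulVec, hAtr, hBtr]
    simp
  simp only [hM4, ext_iff_mulVec, funext_iff]

/-- Reduction of the induction equation (M4) under the linear ansatz
`v = A(t)x`, `H = B(t)x` to the matrix ODE `B' = AB - BA` ((2.7)–(2.9)). -/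
theorem stmt_18 (η : ℝ)
    (A B B' : ℝ → Matrix (Fin 3) (Fin 3) ℝ)
    (hAcont : Continuous A)
    (hAtr : ∀ t, (A t).trace = 0) (hBtr : ∀ t, (B t).trace = 0)
    (hB : ∀ i j t, HasDerivAt (fun s => B s i j) (B' t i j) t) :
    (∀ (t : ℝ) (x : Fin 3 → ℝ) (i : Fin 3),
        deriv (fun s => (B s).mulVec x i) t
          = vcurl (fun y => cross3 ((A t).mulVec y) ((B t).mulVec y)) x i
            + η * slap (fun y => (B t).mulVec y i) x)
      ↔ ∀ t, B' t = A t * B t - B t * A t :=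
  stmt_18_general η A B B' hAtr hBtr hB
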